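/- Let Ŝ be a singular symmetric positive semidefinite d×d real matrix with kernel of dimension m ≥ 1, let P be the orthogonal projection onto ker Ŝ, and for t > 0 set S(t) = Ŝ + tP. Then for every symmetric positive definite d×d matrix Σ and every t > 0: √λ_min(Σ) · m · √t ≤ Tr((S(t)^{1/2} Σ S(t)^{1/2})^{1/2}) − Tr((Ŝ^{1/2} Σ Ŝ^{1/2})^{1/2}) ≤ √λ_max(Σ) · m · √t. -/

import Mathlib

open Matrix BigOperators Finset
open scoped Classical

/-- Unique positive semidefinite square root of a positive semidefinite matrix
(and junk value `0` on other matrices). -/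
noncomputable def msqrt {d : ℕ} (M : Matrix (Fin d) (Fin d) ℝ) :
    Matrix (Fin d) (Fin d) ℝ :=
  if h : M.PosSemidef then
    (h.1.eigenvectorUnitary : Matrix (Fin d) (Fin d) ℝ) * diagonal (Real.sqrt ∘ h.1.eigenvalues) *
      (star h.1.eigenvectorUnitary : Matrix (Fin d) (Fin d) ℝ)
  else 0

/-- Smallest eigenvalue of a symmetric matrix (junk value `0` otherwise). -/
noncomputable def lmin {d : ℕ} (M : Matrix (Fin d) (Fin d) ℝ) : ℝ :=
  if h : M.IsHermitian then ⨅ i, h.eigenvalues i else 0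

/-- Largest eigenvalue of a symmetric matrix (junk value `0` otherwise). -/
noncomputable def lmax {d : ℕ} (M : Matrix (Fin d) (Fin d) ℝ) : ℝ :=
  if h : M.IsHermitian then ⨆ i, h.eigenvalues i else 0

/-- Squared Bures–Wasserstein distance. -/
noncomputable def W2sq {d : ℕ} (A B : Matrix (Fin d) (Fin d) ℝ) : ℝ :=
  A.trace + B.trace - 2 * (msqrt (msqrt A * B * msqrt A)).trace

/-- The conditional barycenter objective `F`. -/
noncomputable def Fobj {d n : ℕ} (Sig : Fin n → Matrix (Fin d) (Fin d) ℝ)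
    (lam : Fin n → ℝ) (S : Matrix (Fin d) (Fin d) ℝ) : ℝ :=
  ∑ k, lam k * W2sq S (Sig k)

/-- Geometric mean `GM(S⁻¹, Σ) = S^{-1/2} (S^{1/2} Σ S^{1/2})^{1/2} S^{-1/2}`. -/
noncomputable def GMinv {d : ℕ} (S Sigma : Matrix (Fin d) (Fin d) ℝ) :
    Matrix (Fin d) (Fin d) ℝ :=
  (msqrt S)⁻¹ * msqrt (msqrt S * Sigma * msqrt S) * (msqrt S)⁻¹

/-- The Spectral Dominance of Positive Weights condition. -/
def SDPW {d n : ℕ} (Sig : Fin n → Matrix (Fin d) (Fin d) ℝ) (lam : Fin n → ℝ) : Prop :=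
  ∑ j ∈ Finset.univ.filter (fun k => lam k < 0), (-lam j) * Real.sqrt (lmax (Sig j))
    < ∑ i ∈ Finset.univ.filter (fun k => 0 < lam k), lam i * Real.sqrt (lmin (Sig i))

/-!
Write `Q = Ŝ^{1/2}`, `W = Σ^{1/2}` and `s = √t`. Since `Q P = 0`, `S(t)^{1/2} = Q + s P`, and
`Tr((A Σ A)^{1/2})` is the trace norm `‖W A‖₁`, so the claim compares `‖W Q + s W P‖₁` with
`‖W Q‖₁`. The upper bound is the triangle inequality together with
`‖s W P‖₁ ≤ s ‖W‖ rank P = s √λ_max m`. For the lower bound, `‖B‖₁ ≥ Tr(Uᵀ B)` for every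
contraction `U`. Take `U = V (1 - P) + √λ_min W⁻¹ P` with `V` the polar factor of `W Q`: the cross
terms of `Uᵀ U` vanish because `(W Q)ᵀ W⁻¹ P = Q P = 0`, so `Uᵀ U ≤ (1 - P) + λ_min P Σ⁻¹ P ≤ 1`,
while `Tr(Uᵀ (W Q + s W P)) = ‖W Q‖₁ + s √λ_min Tr P`.
-/

open scoped MatrixOrder

namespace Matrix

variable {m n : Type*} [Fintype m]

lemma isSelfAdjoint_transpose_mul_self (B : Matrix m n ℝ) : IsSelfAdjoint (Bᵀ * B) := by
  rw [IsSelfAdjoint, star_eq_conjTranspose, conjTranspose_eq_transpose_of_trivial, transpose_mul,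
    transpose_transpose]

lemma apply_le_apply_of_le {A B : Matrix n n ℝ} (h : A ≤ B) (j : n) : A j j ≤ B j j := by
  have := (le_iff.mp h).diag_nonneg (i := j)
  rwa [sub_apply, sub_nonneg] at this

variable [Fintype n]

lemma trace_transpose_mul_le (X Y : Matrix m n ℝ) :
    (Xᵀ * Y).trace ≤ ∑ j, √((Xᵀ * X) j j) * √((Yᵀ * Y) j j) := by
  refine Finset.sum_le_sum fun j _ => ?_
  simpa [mul_apply, sq] using Real.sum_mul_le_sqrt_mul_sqrt univ (fun i => X i j) (fun i => Y i j)

lemma posSemidef_of_transpose_eq_of_idempotent {P : Matrix n n ℝ} (hPt : Pᵀ = P)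
    (hPP : P * P = P) : P.PosSemidef := by
  have := posSemidef_conjTranspose_mul_self P
  rwa [conjTranspose_eq_transpose_of_trivial, hPt, hPP] at this

lemma transpose_mul_mul_le_of_le {A B : Matrix n n ℝ} (h : A ≤ B) (C : Matrix n n ℝ) :
    Cᵀ * A * C ≤ Cᵀ * B * C := by
  simpa only [star_eq_conjTranspose, conjTranspose_eq_transpose_of_trivial] using
    star_left_conjugate_le_conjugate h C

variable [DecidableEq n]

lemma continuousOn_spectrum_real (f : ℝ → ℝ) (A : Matrix n n ℝ) :
    ContinuousOn f (spectrum ℝ A) :=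
  A.finite_real_spectrum.continuousOn f

lemma IsHermitian.trace_cfc {A : Matrix n n ℝ} (hA : A.IsHermitian) (f : ℝ → ℝ) :
    (cfc f A).trace = ∑ i, f (hA.eigenvalues i) := by
  rw [hA.cfc_eq, IsHermitian.cfc, Unitary.conjStarAlgAut_apply, trace_mul_cycle,
    Unitary.coe_star_mul_self, Matrix.one_mul, trace_diagonal]
  rfl

lemma transpose_cfc (f : ℝ → ℝ) (A : Matrix n n ℝ) : (cfc f A)ᵀ = cfc f A := by
  rw [← conjTranspose_eq_transpose_of_trivial]
  exact (cfc_predicate f A).star_eq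

noncomputable def traceNorm (B : Matrix m n ℝ) : ℝ :=
  (cfc Real.sqrt (Bᵀ * B)).trace

-- Diagonalise `Bᵀ B` and apply Cauchy–Schwarz column by column.
lemma trace_transpose_mul_le_traceNorm {U B : Matrix m n ℝ} (hU : Uᵀ * U ≤ 1) :
    (Uᵀ * B).trace ≤ traceNorm B := by
  have hX : (Bᵀ * B).IsHermitian := isSelfAdjoint_transpose_mul_self B
  set E : Matrix n n ℝ := ↑hX.eigenvectorUnitary
  have hEE : E * Eᵀ = 1 := by
    simpa [E, star_eq_conjTranspose] using Unitary.coe_mul_star_self hX.eigenvectorUnitary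
  have hEtE : Eᵀ * E = 1 := by
    simpa [E, star_eq_conjTranspose] using Unitary.coe_star_mul_self hX.eigenvectorUnitary
  have hdiag : (B * E)ᵀ * (B * E) = diagonal hX.eigenvalues := by
    have := hX.conjStarAlgAut_star_eigenvectorUnitary
    rw [Unitary.conjStarAlgAut_star_apply] at this
    simpa [E, Matrix.mul_assoc, star_eq_conjTranspose] using this
  have hUE : ∀ j, ((U * E)ᵀ * (U * E)) j j ≤ 1 := fun j => by
    simpa only [transpose_mul, Matrix.mul_assoc, Matrix.one_mul, hEtE, one_apply_eq] using
      apply_le_apply_of_le (transpose_mul_mul_le_of_le hU E) j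
  calc (Uᵀ * B).trace = ((U * E)ᵀ * (B * E)).trace := by
        rw [transpose_mul, Matrix.mul_assoc, trace_mul_comm Eᵀ, Matrix.mul_assoc,
          Matrix.mul_assoc, hEE, Matrix.mul_one]
    _ ≤ ∑ j, √(((U * E)ᵀ * (U * E)) j j) * √(((B * E)ᵀ * (B * E)) j j) :=
        trace_transpose_mul_le _ _
    _ ≤ ∑ j, √(hX.eigenvalues j) := by
        refine Finset.sum_le_sum fun j _ => ?_
        rw [hdiag, diagonal_apply_eq]
        exact mul_le_of_le_one_left (Real.sqrt_nonneg _) (Real.sqrt_le_one.mpr (hUE j))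
    _ = traceNorm B := (hX.trace_cfc _).symm

-- Since `(√0)⁻¹ = 0`, this is `B |B|⁺`, the partial isometry of the polar decomposition of `B`.
noncomputable def polarFactor (B : Matrix m n ℝ) : Matrix m n ℝ :=
  B * cfc (fun x => (√x)⁻¹) (Bᵀ * B)

lemma transpose_polarFactor_mul_self_le_one (B : Matrix m n ℝ) :
    (polarFactor B)ᵀ * polarFactor B ≤ 1 := by
  have hX := isSelfAdjoint_transpose_mul_self B
  have hc := continuousOn_spectrum_real (fun x => (√x)⁻¹) (Bᵀ * B)
  have h : (polarFactor B)ᵀ * polarFactor B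
      = cfc (fun x => (√x)⁻¹ * x * (√x)⁻¹) (Bᵀ * B) := by
    rw [cfc_mul _ _ _ (by fun_prop) hc, cfc_mul _ _ _ hc (by fun_prop), cfc_id' ℝ (Bᵀ * B),
      polarFactor, transpose_mul, transpose_cfc]
    simp only [Matrix.mul_assoc]
  rw [h]
  refine cfc_le_one _ _ fun x _ => ?_
  rcases le_or_gt x 0 with hx | hx
  · simp [Real.sqrt_eq_zero'.mpr hx]
  · calc (√x)⁻¹ * x * (√x)⁻¹ = x / √x ^ 2 := by ring
      _ = 1 := by rw [Real.sq_sqrt hx.le, div_self hx.ne']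
      _ ≤ 1 := le_rfl

lemma trace_transpose_polarFactor_mul (B : Matrix m n ℝ) :
    ((polarFactor B)ᵀ * B).trace = traceNorm B := by
  have hX := isSelfAdjoint_transpose_mul_self B
  have hc := continuousOn_spectrum_real (fun x => (√x)⁻¹) (Bᵀ * B)
  have h : (fun x => (√x)⁻¹ * x) = Real.sqrt :=
    funext fun x => by rw [inv_mul_eq_div, Real.div_sqrt]
  rw [traceNorm, ← h, cfc_mul _ _ _ hc (by fun_prop), cfc_id' ℝ (Bᵀ * B), polarFactor,
    transpose_mul, transpose_cfc, Matrix.mul_assoc]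

lemma traceNorm_add_le (B C : Matrix m n ℝ) :
    traceNorm (B + C) ≤ traceNorm B + traceNorm C := by
  have hV := transpose_polarFactor_mul_self_le_one (B + C)
  rw [← trace_transpose_polarFactor_mul, Matrix.mul_add, trace_add]
  exact add_le_add (trace_transpose_mul_le_traceNorm hV) (trace_transpose_mul_le_traceNorm hV)

lemma traceNorm_mul_le {P : Matrix n n ℝ} (hPt : Pᵀ = P) (hPP : P * P = P) {Z : Matrix m n ℝ}
    {c : ℝ} (hZ : Zᵀ * Z ≤ c • 1) : traceNorm (Z * P) ≤ √c * P.trace := by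
  set V := polarFactor (Z * P)
  have hVP : ∀ j, ((V * P)ᵀ * (V * P)) j j ≤ P j j := fun j => by
    have hV := transpose_mul_mul_le_of_le (transpose_polarFactor_mul_self_le_one (Z * P)) P
    simpa only [transpose_mul, hPt, Matrix.mul_assoc, Matrix.mul_one, hPP] using
      apply_le_apply_of_le hV j
  have hZP : ∀ j, ((Z * P)ᵀ * (Z * P)) j j ≤ c * P j j := fun j => by
    simpa only [transpose_mul, hPt, Matrix.mul_assoc, Matrix.mul_smul, Matrix.smul_mul,
      Matrix.mul_one, hPP, smul_apply, smul_eq_mul] using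
      apply_le_apply_of_le (transpose_mul_mul_le_of_le hZ P) j
  have hP : ∀ j, 0 ≤ P j j := fun _ =>
    (posSemidef_of_transpose_eq_of_idempotent hPt hPP).diag_nonneg
  calc traceNorm (Z * P) = ((V * P)ᵀ * (Z * P)).trace := by
        rw [← trace_transpose_polarFactor_mul, transpose_mul, hPt, Matrix.mul_assoc,
          trace_mul_comm P, Matrix.mul_assoc, Matrix.mul_assoc, hPP]
    _ ≤ ∑ j, √(((V * P)ᵀ * (V * P)) j j) * √(((Z * P)ᵀ * (Z * P)) j j) :=
        trace_transpose_mul_le _ _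
    _ ≤ ∑ j, √(P j j) * √(c * P j j) := by
        gcongr with j
        exacts [hVP j, hZP j]
    _ = √c * P.trace := by
        rw [trace, mul_sum]
        refine sum_congr rfl fun j _ => ?_
        rw [Real.sqrt_mul' c (hP j), mul_left_comm, Real.mul_self_sqrt (hP j), diag_apply]

lemma traceNorm_add_trace_le_traceNorm_add {P : Matrix n n ℝ} (hPt : Pᵀ = P) (hPP : P * P = P)
    {X Y C : Matrix m n ℝ} (hXP : X * P = 0) (hYP : Y * P = Y) (hXC : Xᵀ * C = 0)
    (hC : Cᵀ * C ≤ P) : traceNorm X + (Cᵀ * Y).trace ≤ traceNorm (X + Y) := by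
  have hVC : (polarFactor X)ᵀ * C = 0 := by
    rw [polarFactor, transpose_mul, Matrix.mul_assoc, hXC, Matrix.mul_zero]
  set V := polarFactor X
  have hCV : Cᵀ * V = 0 := by
    rw [← transpose_transpose (Cᵀ * V), transpose_mul, transpose_transpose, hVC, transpose_zero]
  have hPct : (1 - P)ᵀ = 1 - P := by rw [transpose_sub, transpose_one, hPt]
  have hPcPc : (1 - P) * (1 - P) = 1 - P := by
    rw [Matrix.sub_mul, Matrix.one_mul, Matrix.mul_sub, Matrix.mul_one, hPP, sub_self, sub_zero]
  set U := V * (1 - P) + C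
  have hUt : Uᵀ = (1 - P) * Vᵀ + Cᵀ := by rw [transpose_add, transpose_mul, hPct]
  have hU : Uᵀ * U ≤ 1 := by
    have hUU : Uᵀ * U = (1 - P)ᵀ * (Vᵀ * V) * (1 - P) + Cᵀ * C := by
      rw [hUt, hPct, Matrix.add_mul, Matrix.mul_add, Matrix.mul_add, ← Matrix.mul_assoc Cᵀ, hCV,
        Matrix.mul_assoc, Matrix.mul_assoc, ← Matrix.mul_assoc Vᵀ, hVC, Matrix.mul_zero,
        Matrix.zero_mul, add_zero, zero_add, ← Matrix.mul_assoc]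
    calc Uᵀ * U ≤ (1 - P)ᵀ * 1 * (1 - P) + P := by
          rw [hUU]
          exact add_le_add
            (transpose_mul_mul_le_of_le (transpose_polarFactor_mul_self_le_one X) _) hC
      _ = 1 := by rw [Matrix.mul_one, hPct, hPcPc, sub_add_cancel]
  have hUX : (Uᵀ * X).trace = traceNorm X := by
    have hCX : (Cᵀ * X).trace = 0 := by
      rw [← trace_transpose, transpose_mul, transpose_transpose, hXC, trace_zero]
    rw [hUt, Matrix.add_mul, trace_add, hCX, add_zero, Matrix.mul_assoc, trace_mul_comm,
      Matrix.mul_assoc, Matrix.mul_sub, hXP, Matrix.mul_one, sub_zero,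
      trace_transpose_polarFactor_mul]
  have hUY : (Uᵀ * Y).trace = (Cᵀ * Y).trace := by
    rw [hUt, Matrix.add_mul, trace_add, Matrix.mul_assoc, trace_mul_comm, Matrix.mul_assoc,
      Matrix.mul_sub, hYP, Matrix.mul_one, sub_self, Matrix.mul_zero, trace_zero, zero_add]
  calc traceNorm X + (Cᵀ * Y).trace = (Uᵀ * (X + Y)).trace := by
        rw [Matrix.mul_add, trace_add, hUX, hUY]
    _ ≤ traceNorm (X + Y) := trace_transpose_mul_le_traceNorm hU

end Matrix

section SquareRoot

variable {d : ℕ} {M B P : Matrix (Fin d) (Fin d) ℝ}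

lemma msqrt_eq_cfc (hM : M.PosSemidef) : msqrt M = cfc Real.sqrt M := by
  rw [hM.1.cfc_eq, IsHermitian.cfc, Unitary.conjStarAlgAut_apply, msqrt, dif_pos hM]
  rfl

lemma msqrt_eq_cfcSqrt (hM : M.PosSemidef) : msqrt M = CFC.sqrt M := by
  rw [msqrt_eq_cfc hM, CFC.sqrt_eq_real_sqrt M hM.nonneg, cfcₙ_eq_cfc]

lemma posSemidef_msqrt (hM : M.PosSemidef) : (msqrt M).PosSemidef := by
  rw [msqrt_eq_cfcSqrt hM, ← nonneg_iff_posSemidef]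
  exact CFC.sqrt_nonneg M

lemma msqrt_mul_self (hM : M.PosSemidef) : msqrt M * msqrt M = M := by
  rw [msqrt_eq_cfcSqrt hM]
  exact CFC.sqrt_mul_sqrt_self M hM.nonneg

lemma msqrt_eq_of_mul_self (hB : B.PosSemidef) (h : B * B = M) : msqrt M = B := by
  have hM : M.PosSemidef := by rw [← h, ← pow_two]; exact hB.pow 2
  rw [msqrt_eq_cfcSqrt hM]
  exact (CFC.sqrt_eq_iff M B hM.nonneg hB.nonneg).mpr h

lemma transpose_msqrt (hM : M.PosSemidef) : (msqrt M)ᵀ = msqrt M := by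
  rw [← conjTranspose_eq_transpose_of_trivial]
  exact (posSemidef_msqrt hM).1

lemma isUnit_msqrt (hM : M.PosDef) : IsUnit (msqrt M) := by
  rw [isUnit_iff_isUnit_det, isUnit_iff_ne_zero]
  intro h
  have := congrArg det (msqrt_mul_self hM.posSemidef)
  rw [det_mul, h, zero_mul] at this
  exact hM.det_pos.ne this

lemma msqrt_mul_eq_zero (hM : M.PosSemidef) (h : M * P = 0) : msqrt M * P = 0 := by
  rwa [← conjTranspose_mul_self_mul_eq_zero, (posSemidef_msqrt hM).1, msqrt_mul_self hM]

lemma msqrt_add_smul (hM : M.PosSemidef) (hPt : Pᵀ = P) (hPP : P * P = P) (hMP : M * P = 0)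
    {t : ℝ} (ht : 0 ≤ t) : msqrt (M + t • P) = msqrt M + √t • P := by
  have hQP := msqrt_mul_eq_zero hM hMP
  have hPQ : P * msqrt M = 0 := by
    rw [← transpose_transpose (P * msqrt M), transpose_mul, transpose_msqrt hM, hPt, hQP,
      transpose_zero]
  refine msqrt_eq_of_mul_self ((posSemidef_msqrt hM).add
    ((posSemidef_of_transpose_eq_of_idempotent hPt hPP).smul (Real.sqrt_nonneg t))) ?_
  rw [Matrix.add_mul, Matrix.mul_add, Matrix.mul_add, msqrt_mul_self hM, Matrix.mul_smul, hQP,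
    Matrix.smul_mul, hPQ, Matrix.smul_mul, Matrix.mul_smul, hPP, smul_smul,
    Real.mul_self_sqrt ht, smul_zero, add_zero, zero_add]

lemma trace_msqrt_mul_mul_eq_traceNorm (hM : M.PosSemidef) (hB : Bᵀ = B) :
    (msqrt (B * M * B)).trace = traceNorm (msqrt M * B) := by
  have h : (msqrt M * B)ᵀ * (msqrt M * B) = B * M * B := by
    rw [transpose_mul, hB, transpose_msqrt hM, Matrix.mul_assoc, ← Matrix.mul_assoc (msqrt M),
      msqrt_mul_self hM, Matrix.mul_assoc]
  have hBMB : (B * M * B).PosSemidef := by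
    simpa only [conjTranspose_eq_transpose_of_trivial, hB] using hM.conjTranspose_mul_mul_same B
  rw [traceNorm, h, msqrt_eq_cfc hBMB]

end SquareRoot

section Eigenvalues

variable {d : ℕ} {M : Matrix (Fin d) (Fin d) ℝ}

lemma lmin_smul_one_le (hM : M.IsHermitian) :
    lmin M • (1 : Matrix (Fin d) (Fin d) ℝ) ≤ M := by
  rw [← Algebra.algebraMap_eq_smul_one, algebraMap_le_iff_le_spectrum (a := M) hM,
    hM.spectrum_real_eq_range_eigenvalues]
  rintro _ ⟨i, rfl⟩
  rw [lmin, dif_pos hM]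
  exact ciInf_le (Finite.bddBelow_range _) i

lemma le_lmax_smul_one (hM : M.IsHermitian) :
    M ≤ lmax M • (1 : Matrix (Fin d) (Fin d) ℝ) := by
  rw [← Algebra.algebraMap_eq_smul_one, le_algebraMap_iff_spectrum_le (a := M) hM,
    hM.spectrum_real_eq_range_eigenvalues]
  rintro _ ⟨i, rfl⟩
  rw [lmax, dif_pos hM]
  exact le_ciSup (Finite.bddAbove_range _) i

lemma lmin_nonneg (hM : M.PosSemidef) : 0 ≤ lmin M := by
  rw [lmin, dif_pos hM.1]
  exact Real.iInf_nonneg hM.eigenvalues_nonneg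

end Eigenvalues

section Kernel

variable {d : ℕ} {M P : Matrix (Fin d) (Fin d) ℝ}

lemma mul_eq_zero_of_mulVec_eq_self_iff (hP : ∀ x, P *ᵥ x = x ↔ M *ᵥ x = 0)
    (hPP : P * P = P) : M * P = 0 :=
  ext_iff_mulVec.mpr fun x => by
    rw [← mulVec_mulVec, zero_mulVec, ← hP, mulVec_mulVec, hPP]

lemma trace_eq_finrank_ker_of_mulVec_eq_self_iff (hP : ∀ x, P *ᵥ x = x ↔ M *ᵥ x = 0)
    (hPP : P * P = P) : P.trace = Module.finrank ℝ (LinearMap.ker M.mulVecLin) := by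
  have hproj : LinearMap.IsProj (LinearMap.ker M.mulVecLin) P.mulVecLin :=
    ⟨fun x => (hP _).mp (by rw [mulVecLin_apply, mulVec_mulVec, hPP]),
      fun x hx => (hP x).mpr hx⟩
  rw [← hproj.trace, ← toLin'_apply', trace_toLin'_eq]

end Kernel

section Bounds

variable {d : ℕ} {M P : Matrix (Fin d) (Fin d) ℝ}

lemma traceNorm_mul_add_smul_le (hM : M.PosSemidef) (hPt : Pᵀ = P) (hPP : P * P = P)
    (Q : Matrix (Fin d) (Fin d) ℝ) {s : ℝ} (hs : 0 ≤ s) :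
    traceNorm (msqrt M * (Q + s • P))
      ≤ traceNorm (msqrt M * Q) + √(lmax M) * s * P.trace := by
  have hZ : (s • msqrt M)ᵀ * (s • msqrt M)
      ≤ (s ^ 2 * lmax M) • (1 : Matrix (Fin d) (Fin d) ℝ) := by
    rw [transpose_smul, transpose_msqrt hM, smul_mul_smul_comm, msqrt_mul_self hM, ← sq,
      ← smul_smul]
    exact smul_le_smul_of_nonneg_left (le_lmax_smul_one hM.1) (sq_nonneg s)
  calc traceNorm (msqrt M * (Q + s • P))
      = traceNorm (msqrt M * Q + (s • msqrt M) * P) := by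
        rw [Matrix.mul_add, Matrix.mul_smul, Matrix.smul_mul]
    _ ≤ traceNorm (msqrt M * Q) + traceNorm ((s • msqrt M) * P) := traceNorm_add_le _ _
    _ ≤ traceNorm (msqrt M * Q) + √(s ^ 2 * lmax M) * P.trace :=
        add_le_add_right (traceNorm_mul_le hPt hPP hZ) _
    _ = traceNorm (msqrt M * Q) + √(lmax M) * s * P.trace := by
        rw [Real.sqrt_mul (sq_nonneg s), Real.sqrt_sq hs]
        ring

lemma le_traceNorm_mul_add_smul {Q : Matrix (Fin d) (Fin d) ℝ} (hM : M.PosDef) (hPt : Pᵀ = P)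
    (hPP : P * P = P) (hQt : Qᵀ = Q) (hQP : Q * P = 0) (s : ℝ) :
    traceNorm (msqrt M * Q) + √(lmin M) * s * P.trace
      ≤ traceNorm (msqrt M * (Q + s • P)) := by
  set W := msqrt M
  have hWt : Wᵀ = W := transpose_msqrt hM.posSemidef
  have hWW : W * W = M := msqrt_mul_self hM.posSemidef
  have hWit : (W⁻¹)ᵀ = W⁻¹ := by rw [transpose_nonsing_inv, hWt]
  have hWiW : W⁻¹ * W = 1 := nonsing_inv_mul W ((isUnit_msqrt hM).map detMonoidHom)
  have hWWi : W * W⁻¹ = 1 := mul_nonsing_inv W ((isUnit_msqrt hM).map detMonoidHom)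
  set C := √(lmin M) • (W⁻¹ * P)
  have hCt : Cᵀ = √(lmin M) • (P * W⁻¹) := by rw [transpose_smul, transpose_mul, hPt, hWit]
  have hC : Cᵀ * C ≤ P :=
    calc Cᵀ * C = Pᵀ * ((W⁻¹)ᵀ * (lmin M • 1) * W⁻¹) * P := by
          rw [hCt, smul_mul_smul_comm, Real.mul_self_sqrt (lmin_nonneg hM.posSemidef), hPt, hWit]
          simp only [Matrix.mul_smul, Matrix.smul_mul, Matrix.mul_one, Matrix.mul_assoc]
      _ ≤ Pᵀ * ((W⁻¹)ᵀ * M * W⁻¹) * P :=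
          transpose_mul_mul_le_of_le (transpose_mul_mul_le_of_le (lmin_smul_one_le hM.1) _) _
      _ = P := by
          rw [← hWW, hWit, hPt, ← Matrix.mul_assoc W⁻¹ W, hWiW, Matrix.one_mul,
            Matrix.mul_assoc, hWWi, Matrix.one_mul, hPP]
  have hXC : (W * Q)ᵀ * C = 0 := by
    rw [transpose_mul, hQt, hWt, Matrix.mul_smul, Matrix.mul_assoc, ← Matrix.mul_assoc W, hWWi,
      Matrix.one_mul, hQP, smul_zero]
  have hCY : (Cᵀ * ((s • W) * P)).trace = √(lmin M) * s * P.trace := by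
    rw [hCt, Matrix.smul_mul, Matrix.smul_mul, Matrix.mul_smul, smul_smul, Matrix.mul_assoc,
      ← Matrix.mul_assoc W⁻¹, hWiW, Matrix.one_mul, hPP, trace_smul, smul_eq_mul]
  have key := traceNorm_add_trace_le_traceNorm_add hPt hPP (Y := (s • W) * P)
    (by rw [Matrix.mul_assoc, hQP, Matrix.mul_zero]) (by rw [Matrix.mul_assoc, hPP]) hXC hC
  rwa [hCY, Matrix.smul_mul, ← Matrix.mul_smul, ← Matrix.mul_add] at key

end Bounds

theorem stmt5_general {d m : ℕ} (Shat P : Matrix (Fin d) (Fin d) ℝ)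
    (hShat : Shat.PosSemidef)
    (hm : m = Module.finrank ℝ (LinearMap.ker Shat.mulVecLin))
    (hPsymm : Pᵀ = P) (hPidem : P * P = P)
    (hPrange : ∀ x : Fin d → ℝ, P.mulVec x = x ↔ Shat.mulVec x = 0) :
    ∀ (Sigma : Matrix (Fin d) (Fin d) ℝ), Sigma.PosDef → ∀ t : ℝ, 0 < t →
      Real.sqrt (lmin Sigma) * (m : ℝ) * Real.sqrt t ≤
          (msqrt (msqrt (Shat + t • P) * Sigma * msqrt (Shat + t • P))).trace
            - (msqrt (msqrt Shat * Sigma * msqrt Shat)).trace ∧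
        (msqrt (msqrt (Shat + t • P) * Sigma * msqrt (Shat + t • P))).trace
            - (msqrt (msqrt Shat * Sigma * msqrt Shat)).trace ≤
          Real.sqrt (lmax Sigma) * (m : ℝ) * Real.sqrt t := by
  intro Sigma hSigma t ht
  have hSP : Shat * P = 0 := mul_eq_zero_of_mulVec_eq_self_iff hPrange hPidem
  have hQt : (msqrt Shat)ᵀ = msqrt Shat := transpose_msqrt hShat
  have hQP : msqrt Shat * P = 0 := msqrt_mul_eq_zero hShat hSP
  have hQsPt : (msqrt Shat + √t • P)ᵀ = msqrt Shat + √t • P := by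
    rw [transpose_add, transpose_smul, hQt, hPsymm]
  have htrace : P.trace = m := by
    rw [hm, trace_eq_finrank_ker_of_mulVec_eq_self_iff hPrange hPidem]
  rw [msqrt_add_smul hShat hPsymm hPidem hSP ht.le,
    trace_msqrt_mul_mul_eq_traceNorm hSigma.posSemidef hQsPt,
    trace_msqrt_mul_mul_eq_traceNorm hSigma.posSemidef hQt, ← htrace]
  have lower := le_traceNorm_mul_add_smul hSigma hPsymm hPidem hQt hQP √t
  have upper := traceNorm_mul_add_smul_le hSigma.posSemidef hPsymm hPidem (msqrt Shat)
    (Real.sqrt_nonneg t)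
  constructor <;> linarith

/-- two-sided bound on the increment of `Tr((S(t)^(1/2) Σ S(t)^(1/2))^(1/2))`
along the perturbation `S(t) = Ŝ + t P` of a singular PSD matrix by the orthogonal
projection `P` onto its kernel, whose dimension is `m ≥ 1`. -/
theorem stmt5 {d m : ℕ} (Shat P : Matrix (Fin d) (Fin d) ℝ)
    (hShat : Shat.PosSemidef)
    (hm : m = Module.finrank ℝ (LinearMap.ker Shat.mulVecLin)) (hm1 : 1 ≤ m)
    (hPsymm : Pᵀ = P) (hPidem : P * P = P)
    (hPrange : ∀ x : Fin d → ℝ, P.mulVec x = x ↔ Shat.mulVec x = 0) :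
    ∀ (Sigma : Matrix (Fin d) (Fin d) ℝ), Sigma.PosDef → ∀ t : ℝ, 0 < t →
      Real.sqrt (lmin Sigma) * (m : ℝ) * Real.sqrt t ≤
          (msqrt (msqrt (Shat + t • P) * Sigma * msqrt (Shat + t • P))).trace
            - (msqrt (msqrt Shat * Sigma * msqrt Shat)).trace ∧
        (msqrt (msqrt (Shat + t • P) * Sigma * msqrt (Shat + t • P))).trace
            - (msqrt (msqrt Shat * Sigma * msqrt Shat)).trace ≤
          Real.sqrt (lmax Sigma) * (m : ℝ) * Real.sqrt t :=
  stmt5_general Shat P hShat hm hPsymm hPidem hPrange
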